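/- arXiv:1309.1040 — 5 statements merged into one kernel-verified Lean document; each statement's English description precedes it below -/
import Mathlib

section
/- Let u, u' be vectors of ±1s of length n and v, v' be vectors of ±1s of length m, and let A = [a_{ij}] be an m×n (0,±1)-matrix that is a (u,u'|v,v')-ASM. Then r⁻_m(v,v') − r⁺_m(v,v') = c⁻_n(u,u') − c⁺_n(u,u'), i.e., the number of indices i with v_i = v'_i = −1 minus the number with v_i = v'_i = +1 equals the number of indices j with u_j = u'_j = −1 minus the number with u_j = u'_j = +1. -/
/-- The nonzero entries of a list of integers alternate in sign. -/
def AltList (l : List ℤ) : Prop :=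
  List.Chain' (fun x y => x * y = -1) (l.filter (· ≠ 0))

/-- A vector of ±1s. -/
def SignVec {p : ℕ} (w : Fin p → ℤ) : Prop := ∀ i, w i = 1 ∨ w i = -1

/-- `A` is a (u,u'|v,v')-ASM: a (0,±1)-matrix such that in the bordered matrix
(u on top, u' on bottom, v on the left, v' on the right, zeros in corners)
the nonzero entries of each interior row and column alternate in sign. -/
def IsGASM {m n : ℕ} (u u' : Fin n → ℤ) (v v' : Fin m → ℤ)
    (A : Matrix (Fin m) (Fin n) ℤ) : Prop :=
  (∀ i j, A i j = 0 ∨ A i j = 1 ∨ A i j = -1) ∧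
  (∀ i : Fin m, AltList (v i :: (List.ofFn fun j => A i j) ++ [v' i])) ∧
  (∀ j : Fin n, AltList (u j :: (List.ofFn fun i => A i j) ++ [u' j]))

/-- Ordinary alternating sign matrix, via the bordered formulation with all borders −1. -/
def IsASM {n : ℕ} (A : Matrix (Fin n) (Fin n) ℤ) : Prop :=
  IsGASM (fun _ => -1) (fun _ => -1) (fun _ => -1) (fun _ => -1) A

/-!
In a sequence of ±1s whose consecutive entries have product −1, twice the sum equals the first
entry plus the last. Dropping the zeros of a bordered row of `A` leaves such a sequence, so the
`i`-th row of `A` sums to `-(v i + v' i) / 2`, and likewise the `j`-th column to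
`-(u j + u' j) / 2`. Summing all entries of `A` by rows and by columns gives
`∑ i, (v i + v' i) = ∑ j, (u j + u' j)`, and `(w i + w' i) / 2` is `1`, `-1` or `0` according as
`w i = w' i = 1`, `w i = w' i = -1` or neither.
-/

open Finset

theorem List.sum_filter_ne_zero {M : Type*} [AddMonoid M] [DecidableEq M] (l : List M) :
    (l.filter (· ≠ 0)).sum = l.sum := by
  induction l with
  | nil => rfl
  | cons a l ih =>
    by_cases ha : a = 0
    · rw [List.filter_cons_of_neg (by simpa using ha), ih, List.sum_cons, ha, zero_add]
    · rw [List.filter_cons_of_pos (by simpa using ha), List.sum_cons, List.sum_cons, ih]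

theorem two_mul_sum_of_isChain_mul_eq_neg_one :
    ∀ {l : List ℤ} (hl : l ≠ []), l.IsChain (fun x y => x * y = -1) →
      2 * l.sum = l.head hl + l.getLast hl
  | [a], _, _ => by simp; ring
  | a :: b :: l, _, h => by
    rw [List.isChain_cons_cons] at h
    have hb : b = -a := by
      rcases Int.eq_one_or_neg_one_of_mul_eq_neg_one' h.1 with ⟨rfl, rfl⟩ | ⟨rfl, rfl⟩ <;> rfl
    have ih := two_mul_sum_of_isChain_mul_eq_neg_one (List.cons_ne_nil b l) h.2
    simp only [List.head_cons, List.getLast_cons (List.cons_ne_nil b l), List.sum_cons] at ih ⊢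
    linear_combination ih + hb

theorem AltList.two_mul_sum_interior {a b : ℤ} {l : List ℤ} (ha : a ≠ 0) (hb : b ≠ 0)
    (h : AltList (a :: l ++ [b])) : 2 * l.sum = -(a + b) := by
  have hfilter : (a :: l ++ [b]).filter (· ≠ 0) = (a :: l.filter (· ≠ 0)) ++ [b] := by
    simp [List.filter_append, ha, hb]
  rw [AltList, hfilter] at h
  have := two_mul_sum_of_isChain_mul_eq_neg_one (by simp) h
  rw [List.getLast_append_singleton, List.sum_append, List.sum_cons, List.sum_singleton,
    List.sum_filter_ne_zero] at this
  simp only [List.cons_append, List.head_cons] at this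
  linear_combination this

theorem SignVec.ne_zero {p : ℕ} {w : Fin p → ℤ} (hw : SignVec w) (i : Fin p) : w i ≠ 0 := by
  rcases hw i with h | h <;> simp [h]

theorem SignVec.two_mul_card_sub_card {p : ℕ} {w w' : Fin p → ℤ} (hw : SignVec w)
    (hw' : SignVec w') :
    2 * (((univ.filter fun i => w i = -1 ∧ w' i = -1).card : ℤ) -
      ((univ.filter fun i => w i = 1 ∧ w' i = 1).card : ℤ)) = -∑ i, (w i + w' i) := by
  simp only [natCast_card_filter, ← sum_sub_distrib, mul_sum, ← sum_neg_distrib]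
  refine sum_congr rfl fun i _ => ?_
  rcases hw i with h | h <;> rcases hw' i with h' | h' <;> simp [h, h']

section IsGASM

variable {m n : ℕ} {u u' : Fin n → ℤ} {v v' : Fin m → ℤ} {A : Matrix (Fin m) (Fin n) ℤ}

theorem IsGASM.two_mul_sum_row (hA : IsGASM u u' v v' A) (hv : SignVec v) (hv' : SignVec v')
    (i : Fin m) : 2 * ∑ j, A i j = -(v i + v' i) := by
  simpa only [List.sum_ofFn] using (hA.2.1 i).two_mul_sum_interior (hv.ne_zero i) (hv'.ne_zero i)

theorem IsGASM.two_mul_sum_col (hA : IsGASM u u' v v' A) (hu : SignVec u) (hu' : SignVec u')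
    (j : Fin n) : 2 * ∑ i, A i j = -(u j + u' j) := by
  simpa only [List.sum_ofFn] using (hA.2.2 j).two_mul_sum_interior (hu.ne_zero j) (hu'.ne_zero j)

end IsGASM

theorem stmt1 {m n : ℕ} (u u' : Fin n → ℤ) (v v' : Fin m → ℤ)
    (hu : SignVec u) (hu' : SignVec u') (hv : SignVec v) (hv' : SignVec v')
    (A : Matrix (Fin m) (Fin n) ℤ) (hA : IsGASM u u' v v' A) :
    ((Finset.univ.filter fun i : Fin m => v i = -1 ∧ v' i = -1).card : ℤ) -
      ((Finset.univ.filter fun i : Fin m => v i = 1 ∧ v' i = 1).card : ℤ) =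
    ((Finset.univ.filter fun j : Fin n => u j = -1 ∧ u' j = -1).card : ℤ) -
      ((Finset.univ.filter fun j : Fin n => u j = 1 ∧ u' j = 1).card : ℤ) := by
  refine mul_left_cancel₀ (two_ne_zero : (2 : ℤ) ≠ 0) ?_
  rw [hv.two_mul_card_sub_card hv', hu.two_mul_card_sub_card hu']
  calc -∑ i, (v i + v' i) = ∑ i, 2 * ∑ j, A i j := by
        simp only [hA.two_mul_sum_row hv hv', sum_neg_distrib]
    _ = ∑ j, 2 * ∑ i, A i j := by rw [← mul_sum, ← mul_sum, sum_comm]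
    _ = -∑ j, (u j + u' j) := by simp only [hA.two_mul_sum_col hu hu', sum_neg_distrib]
end

section
/- Let A be an m×n (0,±1)-matrix that is a (u,u'|v,v')-ASM, and let u⁺ = #{j : u_j = +1} and u⁻ = #{j : u_j = −1}. Then for every k with 1 ≤ k ≤ m, the partial sums satisfy −u⁺ ≤ r⁻_k(v,v') − r⁺_k(v,v') ≤ u⁻, where r⁺_k and r⁻_k count indices i ≤ k with v_i = v'_i = +1 and v_i = v'_i = −1 respectively. -/
/-!
The sum of the entries in the first `k` rows is computed in two ways. In a bordered row the
nonzero entries alternate, so the interior entries sum to `-(v i + v' i) / 2`, which is `1`, `-1`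
or `0` according as `v i = v' i = -1`, `v i = v' i = 1` or neither; summing over `i < k` gives
`r⁻ₖ - r⁺ₖ`. In a column, the first `k` entries sum to `0` or `-u j`, so summing over `j` places
the same total between `-u⁺` and `u⁻`.
-/

open Finset

namespace AltList

theorem of_prefix {l l' : List ℤ} (h : AltList l) (hl : l' <+: l) : AltList l' :=
  List.IsChain.prefix h (hl.filter _)

theorem cons_zero_iff {a : ℤ} {l : List ℤ} : AltList (a :: 0 :: l) ↔ AltList (a :: l) := by
  simp [AltList, List.filter_cons]

theorem eq_neg_of_cons_cons {a b : ℤ} {l : List ℤ} (ha : a ≠ 0) (hb : b ≠ 0)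
    (h : AltList (a :: b :: l)) : b = -a ∧ AltList (b :: l) := by
  simp only [AltList, List.filter_cons, ne_eq, decide_not, ha, hb, decide_false, Bool.not_false,
    ↓reduceIte] at h ⊢
  obtain ⟨hab, h'⟩ := List.isChain_cons_cons.mp h
  refine ⟨?_, h'⟩
  rcases Int.eq_one_or_neg_one_of_mul_eq_neg_one hab with rfl | rfl <;> linarith

theorem sum_eq_zero_or_neg_of_cons {a : ℤ} {l : List ℤ} (ha : a ≠ 0) (h : AltList (a :: l)) :
    l.sum = 0 ∨ l.sum = -a := by
  induction l generalizing a with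
  | nil => simp
  | cons b l ih =>
    by_cases hb : b = 0
    · subst hb
      simpa using ih ha (cons_zero_iff.mp h)
    · obtain ⟨rfl, h'⟩ := eq_neg_of_cons_cons ha hb h
      rcases ih hb h' with hs | hs <;> simp [hs]

theorem two_mul_sum_eq_neg_add {a b : ℤ} {l : List ℤ} (ha : a ≠ 0) (hb : b ≠ 0)
    (h : AltList (a :: l ++ [b])) : 2 * l.sum = -(a + b) := by
  induction l generalizing a with
  | nil =>
    obtain ⟨rfl, -⟩ := eq_neg_of_cons_cons ha hb h
    simp
  | cons c l ih =>
    by_cases hc : c = 0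
    · subst hc
      simpa using ih ha (cons_zero_iff.mp h)
    · obtain ⟨rfl, h'⟩ := eq_neg_of_cons_cons ha hc h
      have := ih hc h'
      simp only [List.sum_cons]
      linarith

end AltList

namespace IsGASM

variable {m n : ℕ} {u u' : Fin n → ℤ} {v v' : Fin m → ℤ} {A : Matrix (Fin m) (Fin n) ℤ}

theorem two_mul_row_sum (hA : IsGASM u u' v v' A) {i : Fin m} (hv : v i ≠ 0) (hv' : v' i ≠ 0) :
    2 * ∑ j, A i j = -(v i + v' i) := by
  rw [← List.sum_ofFn]
  exact AltList.two_mul_sum_eq_neg_add hv hv' (hA.2.1 i)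

theorem partial_col_sum_eq_zero_or_neg (hA : IsGASM u u' v v' A) {j : Fin n} (hu : u j ≠ 0)
    (k : ℕ) : ∑ i with i.val < k, A i j = 0 ∨ ∑ i with i.val < k, A i j = -u j := by
  rw [← List.sum_take_ofFn]
  refine AltList.sum_eq_zero_or_neg_of_cons hu ((hA.2.2 j).of_prefix ?_)
  exact ((List.prefix_cons_inj _).mpr (List.take_prefix k _)).trans (List.prefix_append _ _)

theorem sum_row_sums (hA : IsGASM u u' v v' A) (hv : SignVec v) (hv' : SignVec v')
    (s : Finset (Fin m)) :
    ∑ i ∈ s, ∑ j, A i j =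
      (#{i ∈ s | v i = -1 ∧ v' i = -1} : ℤ) - #{i ∈ s | v i = 1 ∧ v' i = 1} := by
  have hrow : ∀ i, ∑ j, A i j =
      (if v i = -1 ∧ v' i = -1 then 1 else 0) - (if v i = 1 ∧ v' i = 1 then 1 else 0) := by
    intro i
    have h := hA.two_mul_row_sum (hv.ne_zero i) (hv'.ne_zero i)
    rcases hv i with hvi | hvi <;> rcases hv' i with hvi' | hvi' <;> simp [hvi, hvi'] at h ⊢ <;>
      omega
  simp only [hrow, sum_sub_distrib, sum_boole]

theorem sum_partial_col_sums_mem_Icc (hA : IsGASM u u' v v' A) (hu : SignVec u) (k : ℕ) :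
    ∑ j, ∑ i with i.val < k, A i j ∈
      Set.Icc (-(#{j | u j = 1} : ℤ)) (#{j | u j = -1} : ℤ) := by
  have hcol : ∀ j, -(if u j = 1 then 1 else 0) ≤ ∑ i with i.val < k, A i j ∧
      ∑ i with i.val < k, A i j ≤ if u j = -1 then 1 else 0 := by
    intro j
    rcases hA.partial_col_sum_eq_zero_or_neg (hu.ne_zero j) k with hs | hs <;>
      rcases hu j with huj | huj <;> simp [hs, huj]
  constructor
  · simpa [sum_boole] using sum_le_sum fun j _ => (hcol j).1
  · simpa [sum_boole] using sum_le_sum fun j _ => (hcol j).2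

end IsGASM

theorem stmt3_general {m n : ℕ} (u u' : Fin n → ℤ) (v v' : Fin m → ℤ)
    (hu : SignVec u) (hv : SignVec v) (hv' : SignVec v')
    (A : Matrix (Fin m) (Fin n) ℤ) (hA : IsGASM u u' v v' A)
    (k : ℕ) :
    -((Finset.univ.filter fun j : Fin n => u j = 1).card : ℤ) ≤
      ((Finset.univ.filter fun i : Fin m => (i : ℕ) < k ∧ v i = -1 ∧ v' i = -1).card : ℤ) -
        ((Finset.univ.filter fun i : Fin m => (i : ℕ) < k ∧ v i = 1 ∧ v' i = 1).card : ℤ) ∧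
    ((Finset.univ.filter fun i : Fin m => (i : ℕ) < k ∧ v i = -1 ∧ v' i = -1).card : ℤ) -
        ((Finset.univ.filter fun i : Fin m => (i : ℕ) < k ∧ v i = 1 ∧ v' i = 1).card : ℤ) ≤
      ((Finset.univ.filter fun j : Fin n => u j = -1).card : ℤ) := by
  have hrows := hA.sum_row_sums hv hv' {i | (i : ℕ) < k}
  rw [filter_filter, filter_filter] at hrows
  have hcols := hA.sum_partial_col_sums_mem_Icc hu k
  rw [sum_comm, hrows] at hcols
  exact hcols

theorem stmt3 {m n : ℕ} (u u' : Fin n → ℤ) (v v' : Fin m → ℤ)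
    (hu : SignVec u) (hu' : SignVec u') (hv : SignVec v) (hv' : SignVec v')
    (A : Matrix (Fin m) (Fin n) ℤ) (hA : IsGASM u u' v v' A)
    (k : ℕ) (hk1 : 1 ≤ k) (hk2 : k ≤ m) :
    -((Finset.univ.filter fun j : Fin n => u j = 1).card : ℤ) ≤
      ((Finset.univ.filter fun i : Fin m => (i : ℕ) < k ∧ v i = -1 ∧ v' i = -1).card : ℤ) -
        ((Finset.univ.filter fun i : Fin m => (i : ℕ) < k ∧ v i = 1 ∧ v' i = 1).card : ℤ) ∧
    ((Finset.univ.filter fun i : Fin m => (i : ℕ) < k ∧ v i = -1 ∧ v' i = -1).card : ℤ) -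
        ((Finset.univ.filter fun i : Fin m => (i : ℕ) < k ∧ v i = 1 ∧ v' i = 1).card : ℤ) ≤
      ((Finset.univ.filter fun j : Fin n => u j = -1).card : ℤ) :=
  stmt3_general u u' v v' hu hv hv' A hA k
end

section
/- Let u, u' be ±1-vectors of length n and v, v' be ±1-vectors of length m. A (u,u'|v,v')-ASM exists if and only if all three conditions hold: (1) r⁻_m(v,v') − r⁺_m(v,v') = c⁻_n(u,u') − c⁺_n(u,u'); (2) −u⁺ ≤ r⁻_k(v,v') − r⁺_k(v,v') ≤ u⁻ for all k = 1,…,m; (3) −v⁺ ≤ c⁻_l(u,u') − c⁺_l(u,u') ≤ v⁻ for all l = 1,…,n. -/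
/-!
A bordered line `a, x₁, …, x_p, b` with `a, b = ±1` alternates exactly when every partial sum of
the `xⱼ` lies in `{0, -a}` and the total is `-a` if `a = b` and `0` otherwise. Necessity then
follows by summing: the first `k` row totals add up to `r⁻_k - r⁺_k`, and that sum is also the sum
over the columns `j` of their partial sums of length `k`, each of which lies in `{0, -u_j}`.
Conversely, conditions (1)–(3) are exactly what makes the least "height function" `h(k, l)` with
boundary values `0`, `0`, `r⁻_k - r⁺_k`, `c⁻_l - c⁺_l` and steps in `{0, -u_l}` along rows and
`{0, -v_k}` along columns well defined; its mixed second differences form the required matrix.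
-/

open Finset Matrix

theorem altList_iff (l : List ℤ) :
    AltList l ↔ (l.filter (· ≠ 0)).IsChain (fun x y => x * y = -1) :=
  Iff.rfl

theorem altList_cons_zero (a : ℤ) (l : List ℤ) : AltList (a :: 0 :: l) ↔ AltList (a :: l) := by
  simp [altList_iff, List.filter_cons]

theorem altList_cons_cons {a x : ℤ} (ha : a ≠ 0) (hx : x ≠ 0) (l : List ℤ) :
    AltList (a :: x :: l) ↔ a * x = -1 ∧ AltList (x :: l) := by
  simp [altList_iff, ha, hx, List.isChain_cons_cons]

theorem altList_pair {a b : ℤ} (ha : a ≠ 0) (hb : b ≠ 0) : AltList [a, b] ↔ a * b = -1 := by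
  simp [altList_iff, ha, hb]

/-- The sum of the interior of an alternating line with border entries `a` and `b`. -/
def lineSum (a b : ℤ) : ℤ := if a = b then -a else 0

theorem lineSum_eq_zero_or_eq_neg (a b : ℤ) : lineSum a b = 0 ∨ lineSum a b = -a := by
  unfold lineSum
  split_ifs <;> simp

theorem lineSum_neg_left {a b : ℤ} (ha : a = 1 ∨ a = -1) (hb : b = 1 ∨ b = -1) :
    lineSum (-a) b = lineSum a b + a := by
  rcases ha with rfl | rfl <;> rcases hb with rfl | rfl <;> simp [lineSum]

theorem neg_ite_le_and_le_ite {a s : ℤ} (ha : a = 1 ∨ a = -1) (hs : s = 0 ∨ s = -a) :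
    -(if a = 1 then 1 else 0) ≤ s ∧ s ≤ if a = -1 then 1 else 0 := by
  rcases ha with rfl | rfl <;> norm_num <;> omega

theorem altList_border_iff {a b : ℤ} (ha : a = 1 ∨ a = -1) (hb : b = 1 ∨ b = -1) (l : List ℤ) :
    AltList (a :: l ++ [b]) ↔
      (∀ k, (l.take k).sum = 0 ∨ (l.take k).sum = -a) ∧ l.sum = lineSum a b := by
  induction l generalizing a with
  | nil =>
    rw [List.cons_append, List.nil_append, altList_pair (by omega) (by omega)]
    rcases ha with rfl | rfl <;> rcases hb with rfl | rfl <;> simp [lineSum]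
  | cons x t ih =>
    simp only [List.cons_append] at ih ⊢
    rw [← Nat.and_forall_add_one]
    simp only [List.take_zero, List.sum_nil, true_or, true_and, List.take_succ_cons,
      List.sum_cons]
    by_cases hx : x = 0
    · subst hx
      simp only [altList_cons_zero, ih ha, zero_add]
    rw [altList_cons_cons (by omega) hx]
    by_cases hxa : x = -a
    · subst hxa
      rw [ih (by omega), lineSum_neg_left ha hb]
      constructor
      · rintro ⟨-, hpre, hsum⟩
        exact ⟨fun k => by have := hpre k; omega, by omega⟩
      · rintro ⟨hpre, hsum⟩
        exact ⟨by rcases ha with rfl | rfl <;> rfl, fun k => by have := hpre k; omega, by omega⟩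
    · constructor
      · rintro ⟨hax, -⟩
        rcases ha with rfl | rfl <;> omega
      · rintro ⟨hpre, -⟩
        have := hpre 0
        simp only [List.take_zero, List.sum_nil, add_zero] at this
        omega

def prefixSum {p : ℕ} (f : Fin p → ℤ) (k : ℕ) : ℤ := ∑ i with i.val < k, f i

section PrefixSum

variable {p : ℕ} (f : Fin p → ℤ)

@[simp]
theorem prefixSum_zero : prefixSum f 0 = 0 := by
  simp [prefixSum]

theorem prefixSum_succ {k : ℕ} (hk : k < p) :
    prefixSum f (k + 1) = prefixSum f k + f ⟨k, hk⟩ := by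
  simp only [prefixSum, sum_filter]
  rw [← sum_ite_eq_of_mem' univ ⟨k, hk⟩ f (mem_univ _), ← sum_add_distrib]
  refine sum_congr rfl fun i _ => ?_
  by_cases hik : i = ⟨k, hk⟩
  · simp [hik]
  · have : i.val ≠ k := fun h => hik (Fin.ext h)
    simp only [hik, if_false, add_zero, Nat.lt_succ_iff_lt_or_eq, this, or_false]

theorem prefixSum_min (k : ℕ) : prefixSum f (min k p) = prefixSum f k := by
  simp [prefixSum]

theorem prefixSum_self : prefixSum f p = ∑ i, f i := by
  simp [prefixSum]

theorem prefixSum_neg (k : ℕ) : prefixSum (fun i => -f i) k = -prefixSum f k :=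
  sum_neg_distrib _

theorem prefixSum_sub (g : Fin p → ℤ) (k : ℕ) :
    prefixSum (fun i => f i - g i) k = prefixSum f k - prefixSum g k :=
  sum_sub_distrib _ _

theorem prefixSum_mono {g : Fin p → ℤ} (h : ∀ i, f i ≤ g i) (k : ℕ) :
    prefixSum f k ≤ prefixSum g k :=
  sum_le_sum fun i _ => h i

theorem prefixSum_nonneg (hf : ∀ i, 0 ≤ f i) (k : ℕ) : 0 ≤ prefixSum f k :=
  sum_nonneg fun i _ => hf i

theorem prefixSum_le_prefixSum_self (hf : ∀ i, 0 ≤ f i) (k : ℕ) :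
    prefixSum f k ≤ prefixSum f p := by
  rw [prefixSum_self]
  exact sum_le_sum_of_subset_of_nonneg (filter_subset _ _) fun i _ _ => hf i

theorem prefixSum_eq_sub {g : ℕ → ℤ} (hf : ∀ j : Fin p, f j = g (j + 1) - g j) (k : ℕ) :
    prefixSum f k = g (min k p) - g 0 := by
  rw [← prefixSum_min]
  suffices ∀ k ≤ p, prefixSum f k = g k - g 0 from this _ (min_le_right k p)
  intro k hk
  induction k with
  | zero => simp
  | succ k ih => rw [prefixSum_succ f hk, ih (by omega), hf]; ring

theorem natCast_card_filter_lt (P : Fin p → Prop) [DecidablePred P] (k : ℕ) :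
    (#{i | i.val < k ∧ P i} : ℤ) = prefixSum (fun i => if P i then 1 else 0) k := by
  rw [natCast_card_filter, prefixSum, sum_filter]
  simp [ite_and]

end PrefixSum

theorem altList_ofFn_iff {p : ℕ} {a b : ℤ} (ha : a = 1 ∨ a = -1) (hb : b = 1 ∨ b = -1)
    (f : Fin p → ℤ) :
    AltList (a :: List.ofFn f ++ [b]) ↔
      (∀ k, prefixSum f k = 0 ∨ prefixSum f k = -a) ∧ ∑ i, f i = lineSum a b := by
  rw [altList_border_iff ha hb, List.sum_ofFn]
  simp only [List.sum_take_ofFn]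
  rfl

section Counts

variable {p : ℕ} (w w' : Fin p → ℤ)

def plusCount : ℕ → ℤ := prefixSum fun i => if w i = 1 then 1 else 0

def minusCount : ℕ → ℤ := prefixSum fun i => if w i = -1 then 1 else 0

/-- `excess w w' k` is `r⁻_k - r⁺_k`. -/
def excess : ℕ → ℤ := prefixSum fun i => lineSum (w i) (w' i)

theorem plusCount_nonneg (k : ℕ) : 0 ≤ plusCount w k :=
  prefixSum_nonneg _ (fun i => by split_ifs <;> simp) k

theorem minusCount_nonneg (k : ℕ) : 0 ≤ minusCount w k :=
  prefixSum_nonneg _ (fun i => by split_ifs <;> simp) k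

theorem minusCount_le_minusCount_self (k : ℕ) : minusCount w k ≤ minusCount w p :=
  prefixSum_le_prefixSum_self _ (fun i => by split_ifs <;> simp) k

theorem natCast_card_filter_eq_plusCount : (#{i | w i = 1} : ℤ) = plusCount w p := by
  rw [natCast_card_filter, plusCount, prefixSum_self]

theorem natCast_card_filter_eq_minusCount : (#{i | w i = -1} : ℤ) = minusCount w p := by
  rw [natCast_card_filter, minusCount, prefixSum_self]

theorem excess_succ {k : ℕ} (hk : k < p) :
    excess w w' (k + 1) = excess w w' k + lineSum (w ⟨k, hk⟩) (w' ⟨k, hk⟩) :=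
  prefixSum_succ _ hk

variable {w}

theorem neg_plusCount_le_excess (hw : SignVec w) (k : ℕ) : -plusCount w k ≤ excess w w' k := by
  rw [plusCount, ← prefixSum_neg]
  exact prefixSum_mono _
    (fun i => (neg_ite_le_and_le_ite (hw i) (lineSum_eq_zero_or_eq_neg _ _)).1) k

theorem excess_sub_excess_le (hw : SignVec w) (k : ℕ) :
    excess w w' p - excess w w' k ≤ minusCount w p - minusCount w k := by
  have := prefixSum_le_prefixSum_self _
    (fun i => sub_nonneg.2 (neg_ite_le_and_le_ite (hw i) (lineSum_eq_zero_or_eq_neg _ (w' i))).2) k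
  rw [prefixSum_sub, prefixSum_sub] at this
  unfold excess minusCount
  linarith

theorem natCast_card_sub_card_eq_excess (hw : SignVec w) (k : ℕ) :
    (#{i | i.val < k ∧ w i = -1 ∧ w' i = -1} : ℤ) - #{i | i.val < k ∧ w i = 1 ∧ w' i = 1} =
      excess w w' k := by
  rw [natCast_card_filter_lt, natCast_card_filter_lt, ← prefixSum_sub]
  refine congrArg (prefixSum · k) (funext fun i => ?_)
  rcases hw i with h | h <;> rcases eq_or_ne (w' i) (w i) with h' | h' <;>
    simp [lineSum, h, h'] <;> grind

theorem natCast_card_sub_card_eq_excess_self (hw : SignVec w) :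
    (#{i | w i = -1 ∧ w' i = -1} : ℤ) - #{i | w i = 1 ∧ w' i = 1} = excess w w' p := by
  rw [← natCast_card_sub_card_eq_excess w' hw]
  simp

theorem excess_bounds_of_bounds_Icc {a b : ℤ} (ha : 0 ≤ a) (hb : 0 ≤ b)
    (h : ∀ k, 1 ≤ k → k ≤ p → -a ≤ excess w w' k ∧ excess w w' k ≤ b) (k : ℕ) :
    -a ≤ excess w w' k ∧ excess w w' k ≤ b := by
  rw [excess, ← prefixSum_min]
  rcases Nat.eq_zero_or_pos (min k p) with h0 | hpos
  · rw [h0, prefixSum_zero]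
    omega
  · exact h _ hpos (min_le_right k p)

end Counts

section Height

variable {m n : ℕ} (u u' : Fin n → ℤ) (v v' : Fin m → ℤ)

/-- The least function on `[0, m] × [0, n]` that vanishes on the sides `k = 0` and `l = 0`,
equals `excess v v' k` at `l = n` and `excess u u' l` at `k = m`, and whose steps in `l`
(resp. `k`) lie in `{0, -u l}` (resp. `{0, -v k}`): each term of the maximum is the lower bound
forced by one of the four sides. -/
def height (k l : ℕ) : ℤ :=
  max (max (-plusCount u l) (excess v v' k - minusCount u n + minusCount u l))
    (max (-plusCount v k) (excess u u' l - minusCount v m + minusCount v k))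

theorem height_swap (k l : ℕ) : height v v' u u' l k = height u u' v v' k l :=
  max_comm _ _

theorem height_succ_left {v} (hv : SignVec v) {k : ℕ} (hk : k < m) (l : ℕ) :
    height u u' v v' (k + 1) l = height u u' v v' k l ∨
      height u u' v v' (k + 1) l = height u u' v v' k l - v ⟨k, hk⟩ := by
  have hs := lineSum_eq_zero_or_eq_neg (v ⟨k, hk⟩) (v' ⟨k, hk⟩)
  simp only [height, plusCount, minusCount, excess, prefixSum_succ _ hk] at hs ⊢
  rcases hv ⟨k, hk⟩ with h | h <;> simp only [h] at hs ⊢ <;> norm_num <;> omega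

theorem height_zero_right
    (hC : ∀ k, -plusCount u n ≤ excess v v' k ∧ excess v v' k ≤ minusCount u n) (k : ℕ) :
    height u u' v v' k 0 = 0 := by
  have := (hC k).2
  have := plusCount_nonneg v k
  have := minusCount_le_minusCount_self v k
  simp only [height, plusCount, minusCount, excess, prefixSum_zero] at *
  omega

theorem height_right_eq {v} (hv : SignVec v) (hE : excess v v' m = excess u u' n)
    (hC : ∀ k, -plusCount u n ≤ excess v v' k ∧ excess v v' k ≤ minusCount u n) (k : ℕ) :
    height u u' v v' k n = excess v v' k := by
  have := (hC k).1
  have := neg_plusCount_le_excess v' hv k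
  have := excess_sub_excess_le v' hv k
  simp only [height]
  omega

end Height

section HeightMatrix

variable {m n : ℕ} (u u' : Fin n → ℤ) (v v' : Fin m → ℤ)

def heightMatrix : Matrix (Fin m) (Fin n) ℤ :=
  Matrix.of fun i j =>
    (height u u' v v' (i + 1) (j + 1) - height u u' v v' i (j + 1)) -
      (height u u' v v' (i + 1) j - height u u' v v' i j)

theorem heightMatrix_transpose : (heightMatrix u u' v v')ᵀ = heightMatrix v v' u u' := by
  ext j i
  simp only [Matrix.transpose_apply, heightMatrix, Matrix.of_apply, height_swap]
  ring

variable {u u' v v'}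

theorem heightMatrix_mem (hv : SignVec v) (i : Fin m) (j : Fin n) :
    heightMatrix u u' v v' i j = 0 ∨ heightMatrix u u' v v' i j = 1 ∨
      heightMatrix u u' v v' i j = -1 := by
  have h₁ := height_succ_left u u' v' hv i.isLt (j + 1)
  have h₀ := height_succ_left u u' v' hv i.isLt j
  simp only [heightMatrix, Matrix.of_apply, Fin.eta] at h₀ h₁ ⊢
  rcases hv i with h | h <;> omega

theorem altList_heightMatrix_row (hv : SignVec v) (hv' : SignVec v')
    (hE : excess v v' m = excess u u' n)
    (hC : ∀ k, -plusCount u n ≤ excess v v' k ∧ excess v v' k ≤ minusCount u n) (i : Fin m) :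
    AltList (v i :: (List.ofFn fun j => heightMatrix u u' v v' i j) ++ [v' i]) := by
  have hrow : ∀ l, prefixSum (fun j => heightMatrix u u' v v' i j) l =
      height u u' v v' (i + 1) (min l n) - height u u' v v' i (min l n) := fun l => by
    rw [prefixSum_eq_sub _ (g := fun l => height u u' v v' (i + 1) l - height u u' v v' i l)
      (fun j => by simp [heightMatrix])]
    simp [height_zero_right u u' v v' hC]
  rw [altList_ofFn_iff (hv i) (hv' i)]
  refine ⟨fun l => ?_, ?_⟩
  · have := height_succ_left u u' v' hv i.isLt (min l n)
    rw [Fin.eta] at this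
    rw [hrow]
    omega
  · rw [← prefixSum_self, hrow, min_self, height_right_eq u u' v' hv hE hC,
      height_right_eq u u' v' hv hE hC, excess_succ _ _ i.isLt]
    simp

theorem isGASM_heightMatrix (hu : SignVec u) (hu' : SignVec u') (hv : SignVec v)
    (hv' : SignVec v') (hE : excess v v' m = excess u u' n)
    (hCv : ∀ k, -plusCount u n ≤ excess v v' k ∧ excess v v' k ≤ minusCount u n)
    (hCu : ∀ l, -plusCount v m ≤ excess u u' l ∧ excess u u' l ≤ minusCount v m) :
    IsGASM u u' v v' (heightMatrix u u' v v') := by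
  refine ⟨heightMatrix_mem hv, altList_heightMatrix_row hv hv' hE hCv, fun j => ?_⟩
  have := altList_heightMatrix_row hu hu' hE.symm hCu j
  rwa [← heightMatrix_transpose] at this

end HeightMatrix

section Necessity

variable {m n : ℕ} {u u' : Fin n → ℤ} {v v' : Fin m → ℤ} {A : Matrix (Fin m) (Fin n) ℤ}

theorem IsGASM.transpose (hA : IsGASM u u' v v' A) : IsGASM v v' u u' Aᵀ :=
  ⟨fun i j => hA.1 j i, hA.2.2, hA.2.1⟩

theorem IsGASM.excess_eq_sum_prefixSum (hv : SignVec v) (hv' : SignVec v')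
    (hA : IsGASM u u' v v' A) (k : ℕ) :
    excess v v' k = ∑ j, prefixSum (fun i => A i j) k := by
  have hrow i := ((altList_ofFn_iff (hv i) (hv' i) _).1 (hA.2.1 i)).2
  simp only [excess, prefixSum, ← hrow]
  exact sum_comm

theorem IsGASM.excess_bounds (hu : SignVec u) (hu' : SignVec u') (hv : SignVec v)
    (hv' : SignVec v') (hA : IsGASM u u' v v' A) (k : ℕ) :
    -plusCount u n ≤ excess v v' k ∧ excess v v' k ≤ minusCount u n := by
  have hcol j := neg_ite_le_and_le_ite (hu j)
    (((altList_ofFn_iff (hu j) (hu' j) _).1 (hA.2.2 j)).1 k)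
  rw [hA.excess_eq_sum_prefixSum hv hv', plusCount, minusCount, prefixSum_self, prefixSum_self,
    ← sum_neg_distrib]
  exact ⟨sum_le_sum fun j _ => (hcol j).1, sum_le_sum fun j _ => (hcol j).2⟩

theorem IsGASM.excess_eq (hu : SignVec u) (hu' : SignVec u') (hv : SignVec v)
    (hv' : SignVec v') (hA : IsGASM u u' v v' A) : excess v v' m = excess u u' n := by
  have hcol j := ((altList_ofFn_iff (hu j) (hu' j) _).1 (hA.2.2 j)).2
  simp only [hA.excess_eq_sum_prefixSum hv hv', prefixSum_self, hcol]
  exact (prefixSum_self _).symm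

end Necessity

theorem stmt10 {m n : ℕ} (u u' : Fin n → ℤ) (v v' : Fin m → ℤ)
    (hu : SignVec u) (hu' : SignVec u') (hv : SignVec v) (hv' : SignVec v') :
    (∃ A : Matrix (Fin m) (Fin n) ℤ, IsGASM u u' v v' A) ↔
    (((Finset.univ.filter fun i : Fin m => v i = -1 ∧ v' i = -1).card : ℤ) -
        ((Finset.univ.filter fun i : Fin m => v i = 1 ∧ v' i = 1).card : ℤ) =
      ((Finset.univ.filter fun j : Fin n => u j = -1 ∧ u' j = -1).card : ℤ) -
        ((Finset.univ.filter fun j : Fin n => u j = 1 ∧ u' j = 1).card : ℤ)) ∧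
    (∀ k : ℕ, 1 ≤ k → k ≤ m →
      -((Finset.univ.filter fun j : Fin n => u j = 1).card : ℤ) ≤
        ((Finset.univ.filter fun i : Fin m => (i : ℕ) < k ∧ v i = -1 ∧ v' i = -1).card : ℤ) -
          ((Finset.univ.filter fun i : Fin m => (i : ℕ) < k ∧ v i = 1 ∧ v' i = 1).card : ℤ) ∧
      ((Finset.univ.filter fun i : Fin m => (i : ℕ) < k ∧ v i = -1 ∧ v' i = -1).card : ℤ) -
          ((Finset.univ.filter fun i : Fin m => (i : ℕ) < k ∧ v i = 1 ∧ v' i = 1).card : ℤ) ≤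
        ((Finset.univ.filter fun j : Fin n => u j = -1).card : ℤ)) ∧
    (∀ l : ℕ, 1 ≤ l → l ≤ n →
      -((Finset.univ.filter fun i : Fin m => v i = 1).card : ℤ) ≤
        ((Finset.univ.filter fun j : Fin n => (j : ℕ) < l ∧ u j = -1 ∧ u' j = -1).card : ℤ) -
          ((Finset.univ.filter fun j : Fin n => (j : ℕ) < l ∧ u j = 1 ∧ u' j = 1).card : ℤ) ∧
      ((Finset.univ.filter fun j : Fin n => (j : ℕ) < l ∧ u j = -1 ∧ u' j = -1).card : ℤ) -
          ((Finset.univ.filter fun j : Fin n => (j : ℕ) < l ∧ u j = 1 ∧ u' j = 1).card : ℤ) ≤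
        ((Finset.univ.filter fun i : Fin m => v i = -1).card : ℤ)) := by
  simp only [natCast_card_sub_card_eq_excess_self _ hv, natCast_card_sub_card_eq_excess_self _ hu,
    natCast_card_sub_card_eq_excess _ hv, natCast_card_sub_card_eq_excess _ hu,
    natCast_card_filter_eq_plusCount, natCast_card_filter_eq_minusCount]
  constructor
  · rintro ⟨A, hA⟩
    exact ⟨hA.excess_eq hu hu' hv hv', fun k _ _ => hA.excess_bounds hu hu' hv hv' k,
      fun l _ _ => hA.transpose.excess_bounds hv hv' hu hu' l⟩
  · rintro ⟨hE, hCv, hCu⟩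
    exact ⟨_, isGASM_heightMatrix hu hu' hv hv' hE
      (excess_bounds_of_bounds_Icc _ (plusCount_nonneg u n) (minusCount_nonneg u n) hCv)
      (excess_bounds_of_bounds_Icc _ (plusCount_nonneg v m) (minusCount_nonneg v m) hCu)⟩
end

section
/- Let n be odd and let u = u' = v = v' = (+1,−1,+1,…,−1,+1) (alternating, starting and ending with +1, length n). Then the n×n matrix A with a_{ij} = (−1)^{i+j+1} (i.e., checkerboard pattern of −1s and +1s with a_{11} = −1) is a (u,u'|v,v')-ASM with no zero entries. -/
/-- The alternating ±1 vector (+1, −1, +1, …). -/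
def altVec (n : ℕ) : Fin n → ℤ := fun j => if Even (j : ℕ) then 1 else -1

/-! A checkerboard of `±1`s bordered by alternating vectors: every bordered row and column is a
run of consecutive powers of `-1`, so all its entries are nonzero and alternate. Oddness of `n`
makes the right (bottom) border entry `(-1)^c` continue the run `(-1)^(c+1), …, (-1)^(c+n)`. -/

lemma altList_of_isChain {l : List ℤ} (hl : ∀ x ∈ l, x ≠ 0)
    (h : l.IsChain fun x y => x * y = -1) : AltList l := by
  rwa [AltList, List.filter_eq_self.mpr (by simpa using hl)]

lemma altList_map_range_neg_one_pow (c m : ℕ) :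
    AltList ((List.range m).map fun t => (-1 : ℤ) ^ (c + t)) := by
  refine altList_of_isChain (by simp) ?_
  rw [List.isChain_map, List.isChain_range]
  intro k _
  rw [← pow_add]
  exact Odd.neg_one_pow ⟨c + k, by omega⟩

lemma cons_ofFn_append_neg_one_pow (c n : ℕ) :
    ((-1 : ℤ) ^ c :: (List.ofFn fun t : Fin n => (-1 : ℤ) ^ (c + t + 1)) ++ [(-1) ^ (c + (n + 1))])
      = (List.range (n + 2)).map fun t => (-1 : ℤ) ^ (c + t) := by
  rw [List.range_succ, List.range_succ_eq_map]
  simp [List.ofFn_eq_map, ← List.map_coe_finRange_eq_range, Function.comp_def, add_assoc]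

lemma altList_bordered_neg_one_pow {n : ℕ} (hn : Odd n) (c : ℕ) :
    AltList ((-1 : ℤ) ^ c :: (List.ofFn fun t : Fin n => (-1 : ℤ) ^ (c + t + 1)) ++ [(-1) ^ c]) := by
  have hlast : (-1 : ℤ) ^ c = (-1) ^ (c + (n + 1)) := by
    rw [pow_add, hn.add_one.neg_one_pow, mul_one]
  nth_rw 2 [hlast]
  rw [cons_ofFn_append_neg_one_pow]
  exact altList_map_range_neg_one_pow c (n + 2)

lemma altVec_apply {n : ℕ} (c : Fin n) : altVec n c = (-1 : ℤ) ^ (c : ℕ) := by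
  rcases Nat.even_or_odd (c : ℕ) with h | h <;> simp [altVec, h, h.neg_one_pow]

theorem stmt14 {n : ℕ} (hn : Odd n) :
    IsGASM (altVec n) (altVec n) (altVec n) (altVec n)
      (Matrix.of fun i j : Fin n => (-1 : ℤ) ^ ((i : ℕ) + (j : ℕ) + 1)) ∧
    ∀ i j : Fin n, (-1 : ℤ) ^ ((i : ℕ) + (j : ℕ) + 1) ≠ 0 := by
  refine ⟨⟨fun i j => Or.inr (neg_one_pow_eq_or ℤ _), fun i => ?_, fun j => ?_⟩,
    fun _ _ => pow_ne_zero _ (by norm_num)⟩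
  · simpa only [Matrix.of_apply, altVec_apply] using altList_bordered_neg_one_pow hn i
  · simpa only [Matrix.of_apply, altVec_apply, Nat.add_comm _ (j : ℕ)]
      using altList_bordered_neg_one_pow hn j
end

section
/- Let n be odd and u = u' = v = v' = (+1,−1,+1,…,−1,+1). Then every (u,u'|v,v')-ASM has at least n nonzero entries, and there exists a (u,u'|v,v')-ASM with exactly n nonzero entries (in the positions of a permutation matrix). -/
/-!
Each column of a (u,u'|v,v')-ASM is bordered by two equal nonzero entries `u j = u' j`, which do
not alternate, so the column must contain a nonzero entry; hence there are at least `n` nonzeros.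
Conversely the diagonal matrix with entries `-altVec n i` turns every bordered row and column into
`(s, -s, s)`.
-/

lemma filter_ne_zero_cons_append_singleton {a b : ℤ} (l : List ℤ) (ha : a ≠ 0)
    (hb : b ≠ 0) :
    (a :: l ++ [b]).filter (· ≠ 0) = a :: l.filter (· ≠ 0) ++ [b] := by
  simp [List.filter_append, ha, hb]

lemma AltList.exists_ne_zero {a b : ℤ} {l : List ℤ} (hab : a * b = 1)
    (h : AltList (a :: l ++ [b])) : ∃ x ∈ l, x ≠ 0 := by
  by_contra! hl
  have hnil : l.filter (· ≠ 0) = [] := List.filter_eq_nil_iff.mpr (by simpa using hl)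
  have ha : a ≠ 0 := left_ne_zero_of_mul_eq_one hab
  have hb : b ≠ 0 := right_ne_zero_of_mul_eq_one hab
  rw [AltList, filter_ne_zero_cons_append_singleton l ha hb, hnil] at h
  have : a * b = -1 := List.isChain_pair (R := fun x y : ℤ => x * y = -1) |>.mp h
  omega

lemma altList_of_filter_eq_singleton {a b c : ℤ} {l : List ℤ}
    (hl : l.filter (· ≠ 0) = [c]) (hac : a * c = -1) (hcb : c * b = -1) :
    AltList (a :: l ++ [b]) := by
  have ha : a ≠ 0 := by rintro rfl; simp at hac
  have hb : b ≠ 0 := by rintro rfl; simp at hcb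
  rw [AltList, filter_ne_zero_cons_append_singleton l ha hb, hl]
  exact List.isChain_cons_cons.mpr ⟨hac, List.isChain_pair.mpr hcb⟩

lemma filter_ofFn_ne_zero_eq_singleton {n : ℕ} {f : Fin n → ℤ} {i : Fin n}
    (hf : ∀ j, f j ≠ 0 ↔ j = i) : (List.ofFn f).filter (· ≠ 0) = [f i] := by
  rw [List.ofFn_eq_map, List.filter_map]
  have : (List.finRange n).filter ((fun x => decide (x ≠ 0)) ∘ f) = [i] := by
    rw [List.filter_congr (p := (fun x => decide (x ≠ 0)) ∘ f) (q := fun j => decide (j = i))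
        fun j _ => decide_eq_decide.mpr (hf j),
      List.filter_eq, List.count_eq_one_of_mem (List.nodup_finRange n) (List.mem_finRange i)]
    rfl
  rw [this, List.map_singleton]

theorem IsGASM.le_card_filter_ne_zero {m n : ℕ} {u u' : Fin n → ℤ} {v v' : Fin m → ℤ}
    {A : Matrix (Fin m) (Fin n) ℤ} (hu : ∀ j, u j * u' j = 1) (hA : IsGASM u u' v v' A) :
    n ≤ (Finset.univ.filter fun p : Fin m × Fin n => A p.1 p.2 ≠ 0).card := by
  have hcol (j : Fin n) : ∃ i, A i j ≠ 0 := by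
    simpa using (hA.2.2 j).exists_ne_zero (hu j)
  choose row hrow using hcol
  calc n = (Finset.univ : Finset (Fin n)).card := (Finset.card_fin n).symm
    _ ≤ _ := Finset.card_le_card_of_injOn (fun j => (row j, j))
      (fun j _ => by simpa using hrow j) fun _ _ _ _ h => congrArg Prod.snd h

lemma card_filter_ne_zero_eq_of_ne_zero_iff {m n : ℕ} {A : Matrix (Fin m) (Fin n) ℤ}
    {f : Fin m → Fin n} (hf : ∀ i j, A i j ≠ 0 ↔ j = f i) :
    (Finset.univ.filter fun p : Fin m × Fin n => A p.1 p.2 ≠ 0).card = m := by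
  have : (Finset.univ.filter fun p : Fin m × Fin n => A p.1 p.2 ≠ 0) =
      Finset.univ.image fun i => (i, f i) := by
    ext ⟨i, j⟩
    simp [hf, eq_comm]
  rw [this, Finset.card_image_of_injective _ fun a b h => (Prod.ext_iff.mp h).1]
  simp

lemma diagonal_ne_zero_iff {n : ℕ} {d : Fin n → ℤ} (hd : ∀ i, d i ≠ 0) (i j : Fin n) :
    Matrix.diagonal d i j ≠ 0 ↔ j = i := by
  by_cases h : i = j
  · subst h; simp [hd]
  · simp [h, Ne.symm h]

theorem isGASM_diagonal {n : ℕ} {u u' d : Fin n → ℤ} (hu : ∀ i, u i * d i = -1)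
    (hu' : ∀ i, d i * u' i = -1) : IsGASM u u' u u' (Matrix.diagonal d) := by
  have hd (i : Fin n) : d i ≠ 0 := by intro h; simpa [h] using hu i
  refine ⟨fun i j => ?_, fun i => ?_, fun j => ?_⟩
  · by_cases h : i = j
    · subst h
      simpa using Or.inr (Int.eq_one_or_neg_one_of_mul_eq_neg_one (hu' i))
    · simp [h]
  · refine altList_of_filter_eq_singleton (filter_ofFn_ne_zero_eq_singleton
      (diagonal_ne_zero_iff hd i)) ?_ ?_ <;> simp [hu, hu']
  · refine altList_of_filter_eq_singleton (filter_ofFn_ne_zero_eq_singleton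
      (i := j) fun i => (diagonal_ne_zero_iff hd i j).trans eq_comm) ?_ ?_ <;> simp [hu, hu']

lemma altVec_mul_self (n : ℕ) (j : Fin n) : altVec n j * altVec n j = 1 := by
  unfold altVec; split_ifs <;> rfl

theorem stmt15_general {n : ℕ} :
    (∀ A : Matrix (Fin n) (Fin n) ℤ,
      IsGASM (altVec n) (altVec n) (altVec n) (altVec n) A →
      n ≤ (Finset.univ.filter fun p : Fin n × Fin n => A p.1 p.2 ≠ 0).card) ∧
    (∃ A : Matrix (Fin n) (Fin n) ℤ,
      IsGASM (altVec n) (altVec n) (altVec n) (altVec n) A ∧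
      (Finset.univ.filter fun p : Fin n × Fin n => A p.1 p.2 ≠ 0).card = n ∧
      ∃ σ : Equiv.Perm (Fin n), ∀ i j : Fin n, A i j ≠ 0 ↔ j = σ i) := by
  refine ⟨fun A hA => hA.le_card_filter_ne_zero (altVec_mul_self n), ?_⟩
  have hd (i : Fin n) : -altVec n i ≠ 0 :=
    neg_ne_zero.mpr (left_ne_zero_of_mul_eq_one (altVec_mul_self n i))
  have hA : ∀ i j, Matrix.diagonal (-altVec n) i j ≠ 0 ↔ j = Equiv.refl (Fin n) i :=
    diagonal_ne_zero_iff hd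
  refine ⟨Matrix.diagonal (-altVec n), ?_, card_filter_ne_zero_eq_of_ne_zero_iff hA, _, hA⟩
  exact isGASM_diagonal (fun i => by simp [altVec_mul_self]) fun i => by simp [altVec_mul_self]

theorem stmt15 {n : ℕ} (hn : Odd n) :
    (∀ A : Matrix (Fin n) (Fin n) ℤ,
      IsGASM (altVec n) (altVec n) (altVec n) (altVec n) A →
      n ≤ (Finset.univ.filter fun p : Fin n × Fin n => A p.1 p.2 ≠ 0).card) ∧
    (∃ A : Matrix (Fin n) (Fin n) ℤ,
      IsGASM (altVec n) (altVec n) (altVec n) (altVec n) A ∧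
      (Finset.univ.filter fun p : Fin n × Fin n => A p.1 p.2 ≠ 0).card = n ∧
      ∃ σ : Equiv.Perm (Fin n), ∀ i j : Fin n, A i j ≠ 0 ↔ j = σ i) :=
  stmt15_general
end
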